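/- For any curve z' : [0,T] → X × Y with z'(0) = z(0), the SBEN functional Π(z') = ∫₀ᵀ [ φ(ż'(t)) + φ^{*ω}(ż'(t) - XH(t,z'(t))) - ∂H/∂t(t,z'(t)) ] dt + H(T, z'(T)) satisfies Π(z') ≥ H(0, z(0)), with equality if and only if z' satisfies the SBEN principle, i.e. ż'(t) - XH(t,z'(t)) ∈ ∂^ω φ(ż'(t)) for a.e. t. Consequently, a curve minimizes Π (achieving the value H(0,z(0))) if and only if it satisfies the SBEN differential inclusion. -/

import Mathlib

open MeasureTheory Real Set
open scoped Classical
noncomputable section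

/-- The phase space `N = X × Y` with `X = Y = ℝⁿ`. -/
abbrev NN (n : ℕ) := (Fin n → ℝ) × (Fin n → ℝ)

/-- Duality pairing `⟨q,p⟩ = q·p` on `ℝⁿ`. -/
def dotp {n : ℕ} (a b : Fin n → ℝ) : ℝ := ∑ i, a i * b i

/-- Symplectic form `ω((q₁,p₁),(q₂,p₂)) = ⟨q₁,p₂⟩ - ⟨q₂,p₁⟩`. -/
def symp {n : ℕ} (z₁ z₂ : NN n) : ℝ := dotp z₁.1 z₂.2 - dotp z₂.1 z₁.2

/-- Pairing `⟨⟨(p₁,q₁),(q₂,p₂)⟩⟩ = ⟨q₁,p₂⟩ + ⟨q₂,p₁⟩` between `N* = Y × X` and `N`. -/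
def pairNN {n : ℕ} (w z : NN n) : ℝ := dotp w.2 z.2 + dotp z.1 w.1

/-- `J(q,p) = (-p,q)`. -/
def Jmap {n : ℕ} (z : NN n) : NN n := (-z.2, z.1)

/-- `J*(p,q) = (-q,p)`. -/
def Jstar {n : ℕ} (w : NN n) : NN n := (-w.2, w.1)

/-- Symplectic Fenchel transform `F^{*ω}(z') = sup_z { ω(z',z) - F(z) }`. -/
def sympConj {n : ℕ} (F : NN n → EReal) (z' : NN n) : EReal :=
  ⨆ z : NN n, (((symp z' z : ℝ) : EReal) - F z)

/-- Ordinary Fenchel conjugate w.r.t. the pairing `⟨⟨·,·⟩⟩`. -/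
def ordConj {n : ℕ} (F : NN n → EReal) (w : NN n) : EReal :=
  ⨆ z : NN n, (((pairNN w z : ℝ) : EReal) - F z)

/-- Symplectic subdifferential `∂^ω F(z)`. -/
def sympSubdiff {n : ℕ} (F : NN n → EReal) (z : NN n) : Set (NN n) :=
  {z' | ∀ z'' : NN n, F z + ((symp z' z'' : ℝ) : EReal) ≤ F (z + z'')}

/-- Ordinary subdifferential `∂F(z)` w.r.t. the pairing `⟨⟨·,·⟩⟩`. -/
def ordSubdiff {n : ℕ} (F : NN n → EReal) (z : NN n) : Set (NN n) :=
  {w | ∀ z'' : NN n, F z + ((pairNN w z'' : ℝ) : EReal) ≤ F (z + z'')}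

/-- Convexity for `EReal`-valued functions. -/
def ConvexE {n : ℕ} (F : NN n → EReal) : Prop :=
  ∀ x y : NN n, ∀ a b : ℝ, 0 ≤ a → 0 ≤ b → a + b = 1 →
    F (a • x + b • y) ≤ (a : EReal) * F x + (b : EReal) * F y

/-- Convexity for `EReal`-valued functions on `ℝⁿ`. -/
def ConvexE' {n : ℕ} (F : (Fin n → ℝ) → EReal) : Prop :=
  ∀ x y : Fin n → ℝ, ∀ a b : ℝ, 0 ≤ a → 0 ≤ b → a + b = 1 →
    F (a • x + b • y) ≤ (a : EReal) * F x + (b : EReal) * F y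

lemma ENreal_toReal_zero {x : ENNReal} (h : x.toReal = 0) (hx : x ≠ ⊤) : x = 0 := by
  rcases ENNReal.toReal_eq_zero_iff x |>.mp h with h' | h'
  · exact h'
  · exact absurd h' hx
lemma aux_sub_le (r c : ℝ) (x : EReal) : (r:EReal) - x ≤ (c:EReal) ↔ ((r - c : ℝ) : EReal) ≤ x := by
  induction x using EReal.rec with
  | bot => simp; rw [← EReal.coe_sub]; exact EReal.coe_ne_bot _
  | coe y =>
      rw [← EReal.coe_sub, EReal.coe_le_coe_iff, EReal.coe_le_coe_iff]
      constructor <;> intro <;> linarith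
  | top => simp

lemma aux_fin (c : ℝ) (x y : EReal) (hx : x ≠ ⊥) (h : (c:EReal) = x + y) :
    ∃ a b : ℝ, x = a ∧ y = b ∧ a + b = c := by
  induction x using EReal.rec with
  | bot => exact absurd rfl hx
  | coe a =>
      induction y using EReal.rec with
      | bot => simp at h
      | coe b =>
          refine ⟨a, b, rfl, rfl, ?_⟩
          rw [← EReal.coe_add, EReal.coe_eq_coe_iff] at h; linarith
      | top => simp at h
  | top =>
      induction y using EReal.rec with
      | bot => simp at h
      | coe b => simp [← EReal.coe_add] at h
      | top => simp at h

lemma dotp_add_left {n : ℕ} (a b c : Fin n → ℝ) : dotp (a + b) c = dotp a c + dotp b c := by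
  simp [dotp, add_mul, Finset.sum_add_distrib]
lemma dotp_add_right {n : ℕ} (a b c : Fin n → ℝ) : dotp a (b + c) = dotp a b + dotp a c := by
  simp [dotp, mul_add, Finset.sum_add_distrib]
lemma dotp_neg_left {n : ℕ} (a b : Fin n → ℝ) : dotp (-a) b = -dotp a b := by simp [dotp]
lemma dotp_neg_right {n : ℕ} (a b : Fin n → ℝ) : dotp a (-b) = -dotp a b := by simp [dotp]

lemma symp_add_right {n : ℕ} (w u v : NN n) : symp w (u + v) = symp w u + symp w v := by
  simp only [symp, Prod.fst_add, Prod.snd_add, dotp_add_left, dotp_add_right]; ring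

lemma symp_sub_right {n : ℕ} (w u v : NN n) : symp w (u - v) = symp w u - symp w v := by
  simp only [symp, Prod.fst_sub, Prod.snd_sub, sub_eq_add_neg, dotp_add_left, dotp_add_right,
    dotp_neg_left, dotp_neg_right, Prod.fst_add, Prod.snd_add, Prod.fst_neg, Prod.snd_neg]; ring

lemma symp_key {n : ℕ} (D v : NN n) : symp (v + Jstar D) v = -pairNN D v := by
  have h : (v + Jstar D) = (v.1 + -D.2, v.2 + D.1) := rfl
  rw [h]; simp only [symp, pairNN, dotp_add_left, dotp_add_right, dotp_neg_left, dotp_neg_right]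
  ring

lemma fenchel {n : ℕ} (φ : NN n → EReal) (z w : NN n) (a b : ℝ)
    (ha : φ z = (a : EReal)) (hb : sympConj φ w = (b : EReal)) :
    symp w z ≤ a + b ∧ (a + b = symp w z ↔ w ∈ sympSubdiff φ z) := by
  have h1 : ((symp w z : ℝ) : EReal) - φ z ≤ sympConj φ w :=
    le_iSup (fun u => ((symp w u : ℝ) : EReal) - φ u) z
  rw [ha, hb, ← EReal.coe_sub, EReal.coe_le_coe_iff] at h1
  have hpart1 : symp w z ≤ a + b := by linarith
  refine ⟨hpart1, ?_, ?_⟩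
  · intro hEq z''
    rw [ha, ← EReal.coe_add]
    have h2 : ((symp w (z + z'') : ℝ) : EReal) - φ (z + z'') ≤ (b : EReal) := by
      rw [← hb]; exact le_iSup (fun u => ((symp w u : ℝ) : EReal) - φ u) (z + z'')
    rw [aux_sub_le] at h2
    have h3 : symp w (z + z'') - b = a + symp w z'' := by
      have := symp_add_right w z z''; linarith
    rwa [h3] at h2
  · intro hmem
    have hle : sympConj φ w ≤ ((symp w z - a : ℝ) : EReal) := by
      refine iSup_le fun u => ?_
      have h3 := hmem (u - z)
      have hu : z + (u - z) = u := by abel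
      rw [hu, ha, ← EReal.coe_add] at h3
      rw [aux_sub_le]
      have h4 : symp w u - (symp w z - a) = a + symp w (u - z) := by
        have := symp_sub_right w u z; linarith
      rwa [h4]
    rw [hb, EReal.coe_le_coe_iff] at hle
    linarith
/-- the SBEN functional `Π` satisfies `Π(z') ≥ H(0,z(0))`, with equality
iff the curve satisfies the SBEN differential inclusion a.e. -/
theorem stmt6 {n : ℕ} (T : ℝ) (hT : 0 < T)
    (H : ℝ → NN n → ℝ) (hH : ContDiff ℝ (⊤ : ℕ∞) (fun p : ℝ × NN n => H p.1 p.2))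
    (DH : ℝ → NN n → NN n)
    (hDH : ∀ t z v, pairNN (DH t z) v = fderiv ℝ (H t) z v)
    (XH : ℝ → NN n → NN n) (hXH : ∀ t z, XH t z = -Jstar (DH t z))
    (Ht : ℝ → NN n → ℝ)
    (hHt : ∀ t z, HasDerivAt (fun s => H s z) (Ht t z) t)
    (φ : NN n → EReal) (hconv : ConvexE φ) (hlsc : LowerSemicontinuous φ)
    (hbot : ∀ w, φ w ≠ ⊥)
    (z0 : NN n) (zc zdot : ℝ → NN n) (h0 : zc 0 = z0)
    (hz : ∀ t, HasDerivAt zc (zdot t) t)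
    (hchain : ∀ t, HasDerivAt (fun s => H s (zc s))
      (Ht t (zc t) + pairNN (DH t (zc t)) (zdot t)) t)
    (g : ℝ → ℝ)
    (hg : ∀ t ∈ Icc (0:ℝ) T,
      (g t : EReal) = φ (zdot t) + sympConj φ (zdot t - XH t (zc t)))
    (hgint : IntervalIntegrable (fun t => g t - Ht t (zc t)) volume 0 T) :
    H 0 z0 ≤ (∫ t in (0:ℝ)..T, (g t - Ht t (zc t))) + H T (zc T) ∧
    ((∫ t in (0:ℝ)..T, (g t - Ht t (zc t))) + H T (zc T) = H 0 z0 ↔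
      ∀ᵐ t ∂(volume.restrict (Icc (0:ℝ) T)),
        zdot t - XH t (zc t) ∈ sympSubdiff φ (zdot t)) := by
  subst h0
  set F : ℝ → ℝ := fun s => H s (zc s) with hFdef
  set ψ : ℝ → ℝ := fun t => g t - Ht t (zc t) with hψdef
  set F' : ℝ → ℝ := fun t => Ht t (zc t) + pairNN (DH t (zc t)) (zdot t) with hF'def
  have hF : ∀ t, HasDerivAt F (F' t) t := by
    intro t; simp only [hF'def]; exact hchain t
  have e0 : F 0 = H 0 (zc 0) := rfl
  have eT : F T = H T (zc T) := rfl
  have hcont : Continuous F := by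
    rw [continuous_iff_continuousAt]; exact fun t => (hF t).continuousAt
  -- pointwise key fact
  have hkey : ∀ t ∈ Icc (0:ℝ) T, 0 ≤ ψ t + F' t ∧
      (ψ t + F' t = 0 ↔ zdot t - XH t (zc t) ∈ sympSubdiff φ (zdot t)) := by
    intro t ht
    obtain ⟨a, b, hpa, hpb, hab⟩ := aux_fin (g t) _ _ (hbot (zdot t)) (hg t ht)
    obtain ⟨hle, hiff⟩ := fenchel φ (zdot t) (zdot t - XH t (zc t)) a b hpa hpb
    have hS : symp (zdot t - XH t (zc t)) (zdot t) = -pairNN (DH t (zc t)) (zdot t) := by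
      rw [hXH, sub_neg_eq_add]; exact symp_key _ _
    have hψF : ψ t + F' t = g t + pairNN (DH t (zc t)) (zdot t) := by
      simp only [hψdef, hF'def]; ring
    rw [hS] at hle hiff
    constructor
    · rw [hψF]; linarith
    · rw [hψF]
      constructor
      · intro h; exact hiff.mp (by linarith)
      · intro h; have := hiff.mpr h; linarith
  -- integrability of ψ
  have hInt0 : IntegrableOn ψ (Ioc 0 T) volume :=
    (intervalIntegrable_iff_integrableOn_Ioc_of_le hT.le).mp hgint
  have hψInt : IntegrableOn ψ (Icc 0 T) volume := by
    rw [integrableOn_Icc_iff_integrableOn_Ioc]; exact hInt0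
  have hre : volume.restrict (Ioc (0:ℝ) T) = volume.restrict (Icc (0:ℝ) T) :=
    Measure.restrict_congr_set Ioc_ae_eq_Icc
  have haeIoo : ∀ᵐ x ∂(volume.restrict (Icc (0:ℝ) T)), x ∈ Ioo (0:ℝ) T := by
    rw [← Measure.restrict_congr_set (Ioo_ae_eq_Icc (μ := volume) (a := (0:ℝ)) (b := T))]
    exact ae_restrict_mem measurableSet_Ioo
  -- main inequality
  have hmain : F 0 - F T ≤ ∫ t in (0:ℝ)..T, ψ t := by
    have h := intervalIntegral.sub_le_integral_of_hasDeriv_right_of_le (g := fun t => -F t)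
      (g' := fun t => -F' t) (φ := ψ) hT.le hcont.neg.continuousOn
      (fun x _ => ((hF x).neg).hasDerivWithinAt)
      hψInt (fun x hx => by
        have := (hkey x (Ioo_subset_Icc_self hx)).1
        show -F' x ≤ ψ x
        linarith)
    beta_reduce at h
    linarith [h]
  refine ⟨by linarith [hmain], ?_, ?_⟩
  · -- equality implies a.e. inclusion
    intro heq
    have hψeq : ∫ t in (0:ℝ)..T, ψ t = F 0 - F T := by linarith [heq]
    obtain ⟨ψm, hψm_meas, hψm_ae⟩ := hInt0.aestronglyMeasurable
    have hψm_ae' : ∀ᵐ x ∂(volume.restrict (Icc (0:ℝ) T)), ψ x = ψm x := by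
      rw [← hre]; exact hψm_ae
    have hDF : deriv F = F' := funext fun t => (hF t).deriv
    set E : ℕ → Set ℝ :=
      fun k => Ioo (0:ℝ) T ∩ {t | 1/(k+1:ℝ) ≤ ψm t + deriv F t} with hEdef
    have hEmeas : ∀ k, MeasurableSet (E k) := by
      intro k
      exact measurableSet_Ioo.inter
        (measurableSet_le measurable_const
          (hψm_meas.measurable.add (measurable_deriv F)))
    have hEsub : ∀ k, E k ⊆ Icc (0:ℝ) T := fun k x hx => Ioo_subset_Icc_self hx.1
    have hIccfin : volume (Icc (0:ℝ) T) < ⊤ := by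
      rw [Real.volume_Icc]; exact ENNReal.ofReal_lt_top
    have hmax_ae : (fun x => max (ψm x) (-F' x)) =ᵐ[volume.restrict (Icc (0:ℝ) T)] ψ := by
      filter_upwards [hψm_ae', haeIoo] with x hx1 hx2
      have h1 := (hkey x (Ioo_subset_Icc_self hx2)).1
      rw [← hx1]
      exact max_eq_left (by linarith)
    have hEnull : ∀ k, volume (E k) = 0 := by
      intro k
      set ε : ℝ := 1/(k+1:ℝ) with hεdef
      have hεpos : 0 < ε := by positivity
      set Ik : ℝ → ℝ := (E k).indicator (fun _ => ε) with hIkdef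
      have hIkInt : IntegrableOn Ik (Icc 0 T) volume :=
        (integrableOn_const hIccfin.ne).indicator (hEmeas k)
      set φk : ℝ → ℝ := fun x => max (ψm x) (-F' x) - Ik x with hφkdef
      have hφk_ae : (fun x => ψ x - Ik x) =ᵐ[volume.restrict (Icc (0:ℝ) T)] φk := by
        filter_upwards [hmax_ae] with x hx
        simp only [hφkdef, hx]
      have hφkInt : IntegrableOn φk (Icc 0 T) volume :=
        (hψInt.sub hIkInt).congr hφk_ae
      have hptw : ∀ x ∈ Ioo (0:ℝ) T, -F' x ≤ φk x := by
        intro x hx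
        show -F' x ≤ φk x
        by_cases hxE : x ∈ E k
        · have hxε : ε ≤ ψm x + deriv F x := hxE.2
          rw [hDF] at hxε
          simp only [hφkdef, hIkdef, indicator_of_mem hxE]
          have h5 : -F' x ≤ ψm x - ε := by linarith
          calc -F' x ≤ ψm x - ε := h5
            _ ≤ max (ψm x) (-F' x) - ε := by
                exact sub_le_sub_right (le_max_left _ _) ε
        · simp only [hφkdef, hIkdef, indicator_of_notMem hxE, sub_zero]
          exact le_max_right _ _
      have hsub := intervalIntegral.sub_le_integral_of_hasDeriv_right_of_le
        (g := fun t => -F t) (g' := fun t => -F' t) (φ := φk) hT.le hcont.neg.continuousOn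
        (fun x _ => ((hF x).neg).hasDerivWithinAt) hφkInt hptw
      have hIkIntI : IntervalIntegrable Ik volume 0 T :=
        (intervalIntegrable_iff_integrableOn_Ioc_of_le hT.le).mpr
          (hIkInt.mono_set Ioc_subset_Icc_self)
      have hφk_int_eq : ∫ y in (0:ℝ)..T, φk y
          = (∫ y in (0:ℝ)..T, ψ y) - ∫ y in (0:ℝ)..T, Ik y := by
        rw [← intervalIntegral.integral_sub hgint hIkIntI]
        apply intervalIntegral.integral_congr_ae
        rw [uIoc_of_le hT.le]
        have h6 : ∀ᵐ x ∂(volume.restrict (Ioc (0:ℝ) T)), ψ x - Ik x = φk x := by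
          rw [hre]; exact hφk_ae
        filter_upwards [(ae_restrict_iff' measurableSet_Ioc).mp h6] with x hx hxI
        exact (hx hxI).symm
      have hIkval : ∫ y in (0:ℝ)..T, Ik y = (volume (E k)).toReal * ε := by
        rw [intervalIntegral.integral_of_le hT.le, hIkdef, setIntegral_indicator (hEmeas k),
          inter_eq_right.mpr (fun x hx => Ioo_subset_Ioc_self hx.1), setIntegral_const]
        exact smul_eq_mul ..

      have h7 : (volume (E k)).toReal * ε ≤ 0 := by
        have := hsub
        beta_reduce at this
        rw [hφk_int_eq, hIkval, hψeq] at this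
        linarith
      have h8 : (volume (E k)).toReal = 0 := by
        have h9 := mul_nonneg (ENNReal.toReal_nonneg (a := volume (E k))) hεpos.le
        have h10 : (volume (E k)).toReal * ε = 0 := le_antisymm h7 h9
        rcases mul_eq_zero.mp h10 with h | h
        · exact h
        · exact absurd h hεpos.ne'
      have hfin : volume (E k) ≠ ⊤ :=
        ((measure_mono (hEsub k)).trans_lt hIccfin).ne
      exact (ENreal_toReal_zero h8 hfin)
    have haeE : ∀ᵐ t ∂(volume.restrict (Icc (0:ℝ) T)), ∀ k : ℕ, t ∉ E k := by
      rw [ae_all_iff]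
      intro k
      exact ae_restrict_of_ae (measure_eq_zero_iff_ae_notMem.mp (hEnull k))
    filter_upwards [hψm_ae', haeIoo, haeE] with t ht1 ht2 ht3
    have hkt := hkey t (Ioo_subset_Icc_self ht2)
    have hle : ψ t + F' t ≤ 0 := by
      by_contra hpos
      push_neg at hpos
      obtain ⟨k, hk⟩ := exists_nat_one_div_lt hpos
      exact ht3 k ⟨ht2, by rw [mem_setOf_eq, hDF, ← ht1]; exact hk.le⟩
    exact hkt.2.mp (le_antisymm hle hkt.1)
  · -- a.e. inclusion implies equality
    intro hae
    have haeH : ∀ᵐ t ∂(volume.restrict (Icc (0:ℝ) T)), ψ t + F' t = 0 := by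
      filter_upwards [hae, ae_restrict_mem measurableSet_Icc] with t h1 h2
      exact (hkey t h2).2.mpr h1
    have haeIoc : ∀ᵐ t ∂(volume.restrict (Ioc (0:ℝ) T)), ψ t + F' t = 0 := by
      rw [hre]; exact haeH
    have hF'int : IntervalIntegrable F' volume 0 T := by
      rw [intervalIntegrable_iff_integrableOn_Ioc_of_le hT.le]
      apply hInt0.neg.congr
      filter_upwards [haeIoc] with t ht
      simp only [Pi.neg_apply]
      linarith
    have hFTC : ∫ t in (0:ℝ)..T, F' t = F T - F 0 :=
      intervalIntegral.integral_eq_sub_of_hasDerivAt (fun x _ => hF x) hF'int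
    have hcongr : ∫ t in (0:ℝ)..T, ψ t = ∫ t in (0:ℝ)..T, -F' t := by
      apply intervalIntegral.integral_congr_ae
      rw [uIoc_of_le hT.le]
      filter_upwards [(ae_restrict_iff' measurableSet_Ioc).mp haeIoc] with t ht htI
      have := ht htI; linarith
    rw [intervalIntegral.integral_neg, hFTC] at hcongr
    linarith [hcongr]
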